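/- Let μ ≥ 1 be an integer, N = 2^μ, and work in ℂ^N with orthonormal basis { |z⟩ : z ∈ {-1,1}^μ }. Fix a ∈ {-1,1}^μ, let |ι⟩ = N^{−1/2} Σ_z |z⟩ be the flat superposition, and define the oracle A = I − 2|a⟩⟨a| and the estimator B = I − 2|ι⟩⟨ι|. Set χ(μ) = arcsin( 2^{−μ/2} ). Then for every nonnegative integer n: (B·A)^n |ι⟩ = α_n(μ) |a⟩ + β_n(μ) Σ_{z ≠ a} |z⟩, where α_n(μ) = (−1)^n sin( (2n+1) χ(μ) ) and β_n(μ) = (−1)^n cos( (2n+1) χ(μ) ) / sqrt( 2^μ − 1 ). -/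

import Mathlib

/-!
Both reflections preserve the plane spanned by `|a⟩` and the uniform superposition of the
unmarked words, so every iterate has the form `x |a⟩ + y Σ_{z ≠ a} |z⟩`. With `sin χ = N^{-1/2}`,
parametrize such a state as `x = ε sin θ`, `y = ε cos θ tan χ`, `ε = ±1`: the oracle negates `x`,
and the diffusion subtracts `2 ε sin χ cos (θ + χ)` from both amplitudes, which by the
sum-to-product formulas sends `(ε, θ)` to `(-ε, θ + 2χ)`. The flat state is `(1, χ)`.
-/

open Matrix Real

theorem sin_add_two_mul_eq (χ θ : ℝ) : sin (θ + 2 * χ) = sin θ + 2 * sin χ * cos (θ + χ) := by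
  have h₁ := sin_add (θ + χ) χ
  have h₂ := sin_sub (θ + χ) χ
  rw [add_sub_cancel_right] at h₂
  rw [show θ + 2 * χ = θ + χ + χ by ring]
  linear_combination h₁ - h₂

theorem cos_add_two_mul_add_cos (χ θ : ℝ) :
    cos (θ + 2 * χ) + cos θ = 2 * cos χ * cos (θ + χ) := by
  have h₁ := cos_add (θ + χ) χ
  have h₂ := cos_sub (θ + χ) χ
  rw [add_sub_cancel_right] at h₂
  rw [show θ + 2 * χ = θ + χ + χ by ring]
  linear_combination h₁ + h₂

theorem two_rpow_neg_div_two (μ : ℕ) : (2 : ℝ) ^ (-(μ : ℝ) / 2) = (√(2 ^ μ))⁻¹ := by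
  rw [sqrt_eq_rpow, ← rpow_natCast, ← rpow_mul zero_le_two, ← rpow_neg zero_le_two]
  ring_nf

theorem sin_arcsin_inv_sqrt {N : ℝ} (hN : 1 ≤ N) : sin (arcsin (√N)⁻¹) = (√N)⁻¹ :=
  sin_arcsin (by linarith [inv_nonneg.2 (sqrt_nonneg N)])
    (inv_le_one_of_one_le₀ (one_le_sqrt.2 hN))

theorem cos_arcsin_inv_sqrt_ne_zero {N : ℝ} (hN : 1 < N) : cos (arcsin (√N)⁻¹) ≠ 0 := by
  have hpos : 0 < (√N)⁻¹ := by positivity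
  have hlt : (√N)⁻¹ < 1 := inv_lt_one_of_one_lt₀ (lt_sqrt zero_le_one |>.2 (by simpa using hN))
  exact (cos_pos_of_mem_Ioo ⟨neg_pi_div_two_lt_arcsin.2 (by linarith),
    arcsin_lt_pi_div_two.2 hlt⟩).ne'

theorem tan_arcsin_inv_sqrt {N : ℝ} (hN : 1 ≤ N) : tan (arcsin (√N)⁻¹) = (√(N - 1))⁻¹ := by
  have hsqrt : √N ≠ 0 := by positivity
  have h : 1 - N⁻¹ = (N - 1) / N := by field_simp
  rw [tan_arcsin, inv_pow, sq_sqrt (by linarith), h, sqrt_div (by linarith)]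
  field_simp

namespace Grover

variable {ι : Type*} [DecidableEq ι]

def householder (v : ι → ℂ) : Matrix ι ι ℂ := 1 - (2 : ℂ) • vecMulVec v (star v)

def markedVec (a : ι) (x y : ℂ) : ι → ℂ := fun z => if z = a then x else y

theorem markedVec_self (a : ι) (x : ℂ) : markedVec a x x = fun _ => x :=
  funext fun _ => ite_self x

variable [Fintype ι]

theorem householder_mulVec (v w : ι → ℂ) :
    householder v *ᵥ w = w - (2 * (star v ⬝ᵥ w)) • v := by
  rw [householder, sub_mulVec, one_mulVec, smul_mulVec, vecMulVec_mulVec, op_smul_eq_smul,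
    smul_smul]

theorem sum_markedVec (a : ι) (x y : ℂ) :
    ∑ z, markedVec a x y z = x + (Fintype.card ι - 1) * y := by
  simp only [markedVec]
  rw [Finset.sum_ite, Finset.filter_eq', Finset.filter_ne']
  simp [Finset.card_erase_of_mem, Nat.cast_pred (Fintype.card_pos_iff.2 ⟨a⟩)]

theorem markedVec_eq_smul_add_smul_sum (a : ι) (x y : ℂ) :
    markedVec a x y =
      x • Pi.single a 1 + y • ∑ z ∈ Finset.univ.filter (· ≠ a), Pi.single z 1 := by
  ext z
  by_cases hz : z = a <;> simp [markedVec, hz, Pi.single_apply]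

theorem householder_single_mulVec_markedVec (a : ι) (x y : ℂ) :
    householder (Pi.single a 1) *ᵥ markedVec a x y = markedVec a (-x) y := by
  ext z
  rw [householder_mulVec]
  by_cases hz : z = a <;> simp [markedVec, hz]
  ring

theorem householder_const_mulVec_markedVec (s : ℝ) (a : ι) (x y : ℂ) :
    householder (fun _ => (s : ℂ)) *ᵥ markedVec a x y =
      let d := 2 * s ^ 2 * (x + (Fintype.card ι - 1) * y)
      markedVec a (x - d) (y - d) := by
  have hdot : star (fun _ => (s : ℂ)) ⬝ᵥ markedVec a x y =
      s * (x + (Fintype.card ι - 1) * y) := by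
    simp only [dotProduct, Pi.star_apply, Complex.star_def, Complex.conj_ofReal]
    rw [← Finset.mul_sum, sum_markedVec]
  ext z
  rw [householder_mulVec, hdot]
  by_cases hz : z = a <;> simp [markedVec, hz] <;> ring

theorem householder_mul_mulVec_markedVec (a : ι) {χ : ℝ}
    (hN : (Fintype.card ι : ℝ) * sin χ ^ 2 = 1) (hcos : cos χ ≠ 0) (ε θ : ℝ) :
    (householder (fun _ => (sin χ : ℂ)) * householder (Pi.single a 1)) *ᵥ
        markedVec a (ε * sin θ : ℝ) (ε * cos θ * tan χ : ℝ) =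
      markedVec a (-ε * sin (θ + 2 * χ) : ℝ) (-ε * cos (θ + 2 * χ) * tan χ : ℝ) := by
  set N : ℝ := (Fintype.card ι : ℝ)
  have hdefect : sin χ ^ 2 * (-sin θ + (N - 1) * (cos θ * tan χ)) = sin χ * cos (θ + χ) := by
    rw [cos_add, tan_eq_sin_div_cos]
    field_simp
    linear_combination (sin χ * cos θ) * hN - (sin χ * cos θ) * sin_sq_add_cos_sq χ
  have hx : -(ε * sin θ) - 2 * sin χ ^ 2 * (-(ε * sin θ) + (N - 1) * (ε * cos θ * tan χ)) =
      -ε * sin (θ + 2 * χ) := by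
    linear_combination (-2 * ε) * hdefect + ε * sin_add_two_mul_eq χ θ
  have hy : ε * cos θ * tan χ - 2 * sin χ ^ 2 * (-(ε * sin θ) + (N - 1) * (ε * cos θ * tan χ)) =
      -ε * cos (θ + 2 * χ) * tan χ := by
    linear_combination (-2 * ε) * hdefect + (ε * tan χ) * cos_add_two_mul_add_cos χ θ
      + (2 * ε * cos (θ + χ)) * tan_mul_cos hcos
  rw [← mulVec_mulVec, householder_single_mulVec_markedVec, householder_const_mulVec_markedVec,
    ← hx, ← hy]
  push_cast
  rfl

theorem householder_mul_pow_mulVec_const (a : ι) {χ : ℝ}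
    (hN : (Fintype.card ι : ℝ) * sin χ ^ 2 = 1) (hcos : cos χ ≠ 0) (n : ℕ) :
    ((householder (fun _ => (sin χ : ℂ)) * householder (Pi.single a 1)) ^ n) *ᵥ
        (fun _ => (sin χ : ℂ)) =
      markedVec a ((-1) ^ n * sin ((2 * n + 1) * χ) : ℝ)
        ((-1) ^ n * cos ((2 * n + 1) * χ) * tan χ : ℝ) := by
  induction n with
  | zero =>
    rw [pow_zero, one_mulVec, ← markedVec_self a]
    congr 2 <;> norm_num [mul_comm (cos χ), tan_mul_cos hcos]
  | succ n ih =>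
    have hθ : (2 * ((n + 1 : ℕ) : ℝ) + 1) * χ = (2 * n + 1) * χ + 2 * χ := by push_cast; ring
    rw [pow_succ', ← mulVec_mulVec, ih, householder_mul_mulVec_markedVec a hN hcos, hθ, pow_succ,
      mul_neg_one]

end Grover

open Grover

theorem grover_iterate (μ : ℕ) (hμ : 1 ≤ μ)
    (a : Fin μ → ({-1, 1} : Finset ℤ)) (n : ℕ) :
    letI aKet : (Fin μ → ({-1, 1} : Finset ℤ)) → ℂ := Pi.single a 1
    letI iotaKet : (Fin μ → ({-1, 1} : Finset ℤ)) → ℂ :=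
      fun _ => ((Real.sqrt (2 ^ μ) : ℝ) : ℂ)⁻¹
    letI A : Matrix (Fin μ → ({-1, 1} : Finset ℤ)) (Fin μ → ({-1, 1} : Finset ℤ)) ℂ :=
      1 - (2 : ℂ) • Matrix.vecMulVec aKet (star aKet)
    letI B : Matrix (Fin μ → ({-1, 1} : Finset ℤ)) (Fin μ → ({-1, 1} : Finset ℤ)) ℂ :=
      1 - (2 : ℂ) • Matrix.vecMulVec iotaKet (star iotaKet)
    letI χ : ℝ := Real.arcsin ((2 : ℝ) ^ (-(μ : ℝ) / 2))
    letI α : ℝ := (-1) ^ n * Real.sin ((2 * n + 1) * χ)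
    letI β : ℝ := (-1) ^ n * Real.cos ((2 * n + 1) * χ) / Real.sqrt (2 ^ μ - 1)
    ((B * A) ^ n).mulVec iotaKet =
      (α : ℂ) • aKet +
        (β : ℂ) • ∑ z ∈ Finset.univ.filter (· ≠ a), Pi.single z (1 : ℂ) := by
  have hN : (1 : ℝ) < 2 ^ μ := one_lt_pow₀ one_lt_two (by omega)
  have hcard : (Fintype.card (Fin μ → ({-1, 1} : Finset ℤ)) : ℝ) = 2 ^ μ := by simp
  have hsin := sin_arcsin_inv_sqrt hN.le
  have hflat : (fun _ => ((√(2 ^ μ) : ℝ) : ℂ)⁻¹ : (Fin μ → ({-1, 1} : Finset ℤ)) → ℂ) =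
      fun _ => ((sin (arcsin (√(2 ^ μ))⁻¹) : ℝ) : ℂ) := by
    simp [hsin]
  show ((householder _ * householder (Pi.single a 1)) ^ n) *ᵥ _ = _
  rw [two_rpow_neg_div_two, hflat,
    householder_mul_pow_mulVec_const a _ (cos_arcsin_inv_sqrt_ne_zero hN),
    tan_arcsin_inv_sqrt hN.le, markedVec_eq_smul_add_smul_sum, div_eq_mul_inv]
  rw [hcard, hsin, inv_pow, sq_sqrt (by positivity), mul_inv_cancel₀ (by positivity)]
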